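/- Let α ≥ 0 and τ ∈ [0,1). For every ζ = x + iy ∈ ℂ, one has ζ² ∈ Ŝ_α if and only if (x²+y²)² + (16τ²/(1−τ²)²)·x²y² − 2τ(2+α)·(x²−y²) ≤ (1+α−τ²)·(1−(1+α)τ²). In other words, the droplet S_α = {ζ ∈ ℂ : ζ² ∈ Ŝ_α} of the Dirac matrix eigenvalues is exactly the region enclosed by the quartic (lemniscate-type) curve (x²+y²)² + (16τ²/(1−τ²)²)x²y² − 2τ(2+α)(x²−y²) = (1+α−τ²)(1−(1+α)τ²). -/
import Mathlib


/-- The elliptical droplet `Ŝ_α`. -/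
def Shat (α τ : ℝ) : Set ℂ :=
  {ζ : ℂ | ((ζ.re - τ * (2 + α)) / ((1 + τ ^ 2) * Real.sqrt (1 + α))) ^ 2 +
      (ζ.im / ((1 - τ ^ 2) * Real.sqrt (1 + α))) ^ 2 ≤ 1}

/-- The droplet `S_α = {ζ : ζ² ∈ Ŝ_α}` of the Dirac matrix eigenvalues is exactly the region
enclosed by the quartic (lemniscate-type) curve. -/
theorem dirac_droplet_quartic (α : ℝ) (hα : 0 ≤ α) (τ : ℝ) (hτ : τ ∈ Set.Ico (0 : ℝ) 1)
    (ζ : ℂ) :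
    ζ ^ 2 ∈ Shat α τ ↔
      (ζ.re ^ 2 + ζ.im ^ 2) ^ 2 +
          (16 * τ ^ 2 / (1 - τ ^ 2) ^ 2) * ζ.re ^ 2 * ζ.im ^ 2 -
          2 * τ * (2 + α) * (ζ.re ^ 2 - ζ.im ^ 2)
        ≤ (1 + α - τ ^ 2) * (1 - (1 + α) * τ ^ 2) := by
  obtain ⟨hτ0, hτ1⟩ := hτ
  have hA : (0:ℝ) < 1 + α := by linarith
  have hs : Real.sqrt (1 + α) ^ 2 = 1 + α := Real.sq_sqrt hA.le
  have ht2 : (0:ℝ) < 1 - τ ^ 2 := by nlinarith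
  have ht1 : (0:ℝ) < 1 + τ ^ 2 := by positivity
  simp only [Shat, Set.mem_setOf_eq]
  have hre : (ζ ^ 2).re = ζ.re ^ 2 - ζ.im ^ 2 := by
    simp [pow_two, Complex.mul_re]
  have him : (ζ ^ 2).im = 2 * ζ.re * ζ.im := by
    simp [pow_two, Complex.mul_im]; ring
  have hd1 : ((1 + τ ^ 2) * Real.sqrt (1 + α)) ^ 2 = (1 + τ ^ 2) ^ 2 * (1 + α) := by
    rw [mul_pow, hs]
  have hd2 : ((1 - τ ^ 2) * Real.sqrt (1 + α)) ^ 2 = (1 - τ ^ 2) ^ 2 * (1 + α) := by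
    rw [mul_pow, hs]
  rw [hre, him, div_pow, div_pow, hd1, hd2,
    div_add_div _ _ (by positivity) (by positivity), div_le_one (by positivity)]
  rw [← sub_nonneg]
  conv_rhs => rw [← sub_nonneg]
  have key :
      ((1 + τ ^ 2) ^ 2 * (1 + α) * ((1 - τ ^ 2) ^ 2 * (1 + α)) -
        ((ζ.re ^ 2 - ζ.im ^ 2 - τ * (2 + α)) ^ 2 * ((1 - τ ^ 2) ^ 2 * (1 + α)) +
          (1 + τ ^ 2) ^ 2 * (1 + α) * (2 * ζ.re * ζ.im) ^ 2)) =
      ((1 + α - τ ^ 2) * (1 - (1 + α) * τ ^ 2) -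
        ((ζ.re ^ 2 + ζ.im ^ 2) ^ 2 +
          (16 * τ ^ 2 / (1 - τ ^ 2) ^ 2) * ζ.re ^ 2 * ζ.im ^ 2 -
          2 * τ * (2 + α) * (ζ.re ^ 2 - ζ.im ^ 2))) * ((1 - τ ^ 2) ^ 2 * (1 + α)) := by
    field_simp
    ring
  rw [key, mul_nonneg_iff_of_pos_right (by positivity)]
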